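/- arXiv:1106.2348 — 3 statements merged into one kernel-verified Lean document; each statement's English description precedes it below -/
import Mathlib

section
/- Let m = x_{i_1} ⋯ x_{i_k} x_{j_1} ⋯ x_{j_k} be a monomial with i_1 ≤ ⋯ ≤ i_k ≤ j_1 ≤ ⋯ ≤ j_k and i_r + 2 ≤ j_r for all r, so that m ∈ I(P_n^c)^k. If j' satisfies i_r + 2 ≤ j' ≤ n for some index r, then the monomial x_{j'} · m / x_{j_r} also belongs to I(P_n^c)^k. -/
open MvPolynomial

/-- The edge ideal of the antipath `P_n^c`: the simple graph on vertices `{1,…,n}`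
(realized as `Fin n`) whose edges are the pairs `{i,j}` with `i + 2 ≤ j`. -/
noncomputable def antipathIdeal (K : Type*) [Field K] (n : ℕ) :
    Ideal (MvPolynomial (Fin n) K) :=
  Ideal.span { m | ∃ i j : Fin n, (i : ℕ) + 2 ≤ (j : ℕ) ∧ m = X i * X j }

theorem X_mul_X_mem_antipathIdeal {K : Type*} [Field K] {n : ℕ} {a b : Fin n}
    (hab : (a : ℕ) + 2 ≤ (b : ℕ)) : (X a * X b : MvPolynomial (Fin n) K) ∈ antipathIdeal K n :=
  Ideal.subset_span ⟨a, b, hab, rfl⟩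

theorem prod_X_mul_prod_X_mem_antipathIdeal_pow {K : Type*} [Field K] {n k : ℕ}
    (a b : Fin k → Fin n) (hab : ∀ s, (a s : ℕ) + 2 ≤ (b s : ℕ)) :
    ((∏ s, X (a s)) * ∏ s, X (b s) : MvPolynomial (Fin n) K) ∈ antipathIdeal K n ^ k := by
  rw [← Finset.prod_mul_distrib]
  simpa using Ideal.prod_mem_prod (s := Finset.univ) (I := fun _ => antipathIdeal K n)
    fun s _ => X_mul_X_mem_antipathIdeal (K := K) (hab s)

theorem antipath_power_replace_upper_general (K : Type*) [Field K] (n k : ℕ)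
    (i j : Fin k → Fin n)
    (hadj : ∀ r : Fin k, (i r : ℕ) + 2 ≤ (j r : ℕ))
    (r : Fin k) (j' : Fin n) (hj' : (i r : ℕ) + 2 ≤ (j' : ℕ)) :
    ((∏ s, X (i s)) * ∏ s, X (Function.update j r j' s) : MvPolynomial (Fin n) K) ∈
      antipathIdeal K n ^ k := by
  refine prod_X_mul_prod_X_mem_antipathIdeal_pow i _ fun s => ?_
  rcases eq_or_ne s r with rfl | hsr
  · simpa using hj'
  · simpa [Function.update_of_ne hsr] using hadj s

/-- If `m = x_{i_1} ⋯ x_{i_k} x_{j_1} ⋯ x_{j_k} ∈ I(P_n^c)^k` with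
`i_1 ≤ ⋯ ≤ i_k ≤ j_1 ≤ ⋯ ≤ j_k` and `i_r + 2 ≤ j_r` for all `r`, and `j'` is a vertex with
`i_r + 2 ≤ j' (≤ n)` for some index `r`, then `x_{j'} · m / x_{j_r}` (i.e. `m` with the
factor `x_{j_r}` replaced by `x_{j'}`) also belongs to `I(P_n^c)^k`. -/
theorem antipath_power_replace_upper (K : Type*) [Field K] (n k : ℕ)
    (i j : Fin k → Fin n) (hi : Monotone i) (hj : Monotone j)
    (hij : ∀ r s : Fin k, i r ≤ j s)
    (hadj : ∀ r : Fin k, (i r : ℕ) + 2 ≤ (j r : ℕ))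
    (r : Fin k) (j' : Fin n) (hj' : (i r : ℕ) + 2 ≤ (j' : ℕ)) :
    ((∏ s, X (i s)) * ∏ s, X (Function.update j r j' s) : MvPolynomial (Fin n) K) ∈
      antipathIdeal K n ^ k :=
  antipath_power_replace_upper_general K n k i j hadj r j' hj'
end

section
/- Let n ≥ 2 and let G be the anticycle on the n+3 vertices x, z_1, z_2, y_1,…,y_n, with J = I(H) the edge ideal of the induced antipath H = G \ {x}. Fix 1 ≤ i ≤ j ≤ n with (i,j) ≠ (n,n), and let I' = J^2 + (x z_1 z_2 y_l : 1 ≤ l ≤ n) + ( x y_{i'} y_{j'} z_2 : 1 ≤ i' ≤ j' ≤ n, (i',j') ≠ (n,n), (i',j') strictly dictionary-smaller than (i,j) ). Then the colon ideal I' : (x y_i y_j z_2) is generated by a subset of the variables of R. -/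
/-!
`I'` is a monomial ideal, so its colon by `m = x y_i y_j z₂` is generated by the monomials
`g / gcd(g, m)` for the generators `g`. Hence it is generated by the variables `u` with `u m ∈ I'`
as soon as every generator keeps such a variable after cancelling `m`. For `x z₁ z₂ y_l` this is
`z₁`; for an earlier `x y_{i'} y_{j'} z₂` it is `y_{i'}` if `i' < i` and `y_{j'}` otherwise. For a
product of two edges of `H` it is a counting argument: apart from `x`, the variables outside the
colon lie in a pair `{t, t+1}` of consecutive path vertices, so each edge has an endpoint among
the colon variables, and a short case analysis shows that `m` cannot absorb both.
-/

open MvPolynomial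

/-! The anticycle `G` on the `n+3` vertices `x, z₁, y₁, …, y_n, z₂`, realized on `Fin (n+3)`
with the cycle labeling `x = 0`, `z₁ = 1`, `y_i = i+1` (so `y_i` has index `i+2` for the
0-indexed `i : Fin n`), `z₂ = n+2`.  The non-edges of `G` are exactly the consecutive pairs
on the cycle `x ∼ z₁ ∼ y₁ ∼ ⋯ ∼ y_n ∼ z₂ ∼ x`. -/

/-- The vertex `x`. -/
def vx (n : ℕ) : Fin (n + 3) := ⟨0, by omega⟩
/-- The vertex `z₁`. -/
def vz1 (n : ℕ) : Fin (n + 3) := ⟨1, by omega⟩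
/-- The vertex `z₂`. -/
def vz2 (n : ℕ) : Fin (n + 3) := ⟨n + 2, by omega⟩
/-- The vertex `y_i` (0-indexed: `vy n i` is `y_{i+1}` of the paper). -/
def vy (n : ℕ) (i : Fin n) : Fin (n + 3) := ⟨(i : ℕ) + 2, by omega⟩

/-- The edge ideal `J = I(H)` of the induced antipath `H = G \ {x}` on the vertices
`z₁, y₁, …, y_n, z₂` (indices `1, …, n+2`): its edges are the pairs of non-consecutive
indices among `1, …, n+2`. -/
noncomputable def Jideal (K : Type*) [Field K] (n : ℕ) :
    Ideal (MvPolynomial (Fin (n + 3)) K) :=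
  Ideal.span { m | ∃ a b : Fin (n + 3),
    1 ≤ (a : ℕ) ∧ (a : ℕ) + 2 ≤ (b : ℕ) ∧ m = X a * X b }

open Finsupp (single)
open scoped Pointwise

namespace MvPolynomial

variable {σ R : Type*} [CommSemiring R]

theorem X_mul_X_eq_monomial (a b : σ) :
    (X a * X b : MvPolynomial σ R) = monomial (single a 1 + single b 1) 1 := by
  simp only [X, monomial_mul, one_mul]

theorem X_mul_X_mul_X_mul_X_eq_monomial (a b c d : σ) :
    (X a * X b * X c * X d : MvPolynomial σ R) =
      monomial (single a 1 + single b 1 + single c 1 + single d 1) 1 := by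
  simp only [X, monomial_mul, one_mul]

theorem span_monomial_image_mul_span_monomial_image (E F : Set (σ →₀ ℕ)) :
    Ideal.span ((monomial · (1 : R)) '' E) * Ideal.span ((monomial · (1 : R)) '' F) =
      Ideal.span ((monomial · (1 : R)) '' (E + F)) := by
  rw [Ideal.span_mul_span']
  congr 1
  ext p
  simp only [Set.mem_mul, Set.mem_image, Set.mem_add]
  constructor
  · rintro ⟨_, ⟨s, hs, rfl⟩, _, ⟨t, ht, rfl⟩, rfl⟩
    exact ⟨s + t, ⟨s, hs, t, ht, rfl⟩, by rw [monomial_mul, one_mul]⟩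
  · rintro ⟨_, ⟨s, hs, t, ht, rfl⟩, rfl⟩
    exact ⟨_, ⟨s, hs, rfl⟩, _, ⟨t, ht, rfl⟩, by rw [monomial_mul, one_mul]⟩

theorem colon_span_monomial_eq_span_X {G : Set (σ →₀ ℕ)} {e : σ →₀ ℕ} {S : Set σ}
    (hS : ∀ v ∈ S, ∃ g ∈ G, g ≤ single v 1 + e) (hG : ∀ g ∈ G, ∃ v ∈ S, e v < g v) :
    (Ideal.span ((monomial · (1 : R)) '' G)).colon
        ((Ideal.span {monomial e 1} : Ideal (MvPolynomial σ R)) : Set (MvPolynomial σ R)) =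
      Ideal.span (X '' S) := by
  apply le_antisymm
  · intro f hf
    rw [Ideal.mem_colon_span_singleton, mem_ideal_span_monomial_image] at hf
    rw [mem_ideal_span_X_image]
    intro ν hν
    obtain ⟨g, hg, hle⟩ := hf (ν + e) (by
      rwa [mem_support_iff, coeff_mul_monomial, mul_one, ← mem_support_iff])
    obtain ⟨v, hv, hlt⟩ := hG g hg
    exact ⟨v, hv, fun hν0 => (hlt.trans_le (hle v)).ne (by simp [hν0])⟩
  · rw [Ideal.span_le]
    rintro _ ⟨v, hv, rfl⟩
    rw [SetLike.mem_coe, Ideal.mem_colon_span_singleton, ← pow_one (X v),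
      ← monomial_single_add, mem_ideal_span_monomial_image]
    intro μ hμ
    obtain ⟨g, hg, hle⟩ := hS v hv
    exact ⟨g, hg, Finset.mem_singleton.mp (support_monomial_subset hμ) ▸ hle⟩

end MvPolynomial

section Anticycle

variable {n : ℕ} {i j : Fin n}

@[simp] theorem vx_val : (vx n : ℕ) = 0 := rfl
@[simp] theorem vz1_val : (vz1 n : ℕ) = 1 := rfl
@[simp] theorem vz2_val : (vz2 n : ℕ) = n + 2 := rfl
@[simp] theorem vy_val (l : Fin n) : (vy n l : ℕ) = l + 2 := rfl

def IsAntipathEdge (a b : Fin (n + 3)) : Prop := 1 ≤ (a : ℕ) ∧ (a : ℕ) + 2 ≤ b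

def AntipathAdj (a b : Fin (n + 3)) : Prop := IsAntipathEdge a b ∨ IsAntipathEdge b a

def edgeExps (n : ℕ) : Set (Fin (n + 3) →₀ ℕ) :=
  {s | ∃ a b, IsAntipathEdge a b ∧ s = single a 1 + single b 1}

def z1Exps (n : ℕ) : Set (Fin (n + 3) →₀ ℕ) :=
  Set.range fun l => single (vx n) 1 + single (vz1 n) 1 + single (vz2 n) 1 + single (vy n l) 1

def earlierExps (n : ℕ) (i j : Fin n) : Set (Fin (n + 3) →₀ ℕ) :=
  {s | ∃ i' j' : Fin n, i' ≤ j' ∧ ¬((i' : ℕ) = n - 1 ∧ (j' : ℕ) = n - 1) ∧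
    (i' < i ∨ (i' = i ∧ j' < j)) ∧
    s = single (vx n) 1 + single (vy n i') 1 + single (vy n j') 1 + single (vz2 n) 1}

def genExps (n : ℕ) (i j : Fin n) : Set (Fin (n + 3) →₀ ℕ) :=
  (edgeExps n + edgeExps n) ∪ z1Exps n ∪ earlierExps n i j

noncomputable def colonExp (n : ℕ) (i j : Fin n) : Fin (n + 3) →₀ ℕ :=
  single (vx n) 1 + single (vy n i) 1 + single (vy n j) 1 + single (vz2 n) 1

theorem Jideal_eq_span_edgeExps (K : Type*) [Field K] (n : ℕ) :
    Jideal K n = Ideal.span ((monomial · (1 : K)) '' edgeExps n) := by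
  rw [Jideal]
  congr 1
  ext p
  constructor
  · rintro ⟨a, b, ha, hab, rfl⟩
    exact ⟨_, ⟨a, b, ⟨ha, hab⟩, rfl⟩, (X_mul_X_eq_monomial a b).symm⟩
  · rintro ⟨_, ⟨a, b, ⟨ha, hab⟩, rfl⟩, rfl⟩
    exact ⟨a, b, ha, hab, (X_mul_X_eq_monomial a b).symm⟩

theorem span_genExps (K : Type*) [Field K] (n : ℕ) (i j : Fin n) :
    Jideal K n ^ 2 +
        Ideal.span { m | ∃ l : Fin n,
          m = X (vx n) * X (vz1 n) * X (vz2 n) * X (vy n l) } +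
        Ideal.span { m | ∃ i' j' : Fin n, i' ≤ j' ∧
          ¬((i' : ℕ) = n - 1 ∧ (j' : ℕ) = n - 1) ∧
          (i' < i ∨ (i' = i ∧ j' < j)) ∧
          m = X (vx n) * X (vy n i') * X (vy n j') * X (vz2 n) } =
      Ideal.span ((monomial · (1 : K)) '' genExps n i j) := by
  simp only [genExps, Set.image_union, Ideal.span_union, Submodule.add_eq_sup,
    Jideal_eq_span_edgeExps, sq, span_monomial_image_mul_span_monomial_image,
    X_mul_X_mul_X_mul_X_eq_monomial]
  congr 3
  · ext p
    simp only [z1Exps, Set.mem_ofPred_eq, Set.mem_image, Set.mem_range]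
    constructor
    · rintro ⟨l, rfl⟩
      exact ⟨_, ⟨l, rfl⟩, rfl⟩
    · rintro ⟨_, ⟨l, rfl⟩, rfl⟩
      exact ⟨l, rfl⟩
  · ext p
    simp only [earlierExps, Set.mem_ofPred_eq]
    constructor
    · rintro ⟨i', j', h₁, h₂, h₃, rfl⟩
      exact ⟨_, ⟨i', j', h₁, h₂, h₃, rfl⟩, rfl⟩
    · rintro ⟨_, ⟨i', j', h₁, h₂, h₃, rfl⟩, rfl⟩
      exact ⟨i', j', h₁, h₂, h₃, rfl⟩

theorem single_add_single_mem_edgeExps {a b : Fin (n + 3)} (h : AntipathAdj a b) :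
    single a 1 + single b 1 ∈ edgeExps n := by
  rcases h with h | h
  · exact ⟨a, b, h, rfl⟩
  · exact ⟨b, a, h, add_comm _ _⟩

/-- The variables `u` with `X_u · x y_i y_j z₂ ∈ I'`: `z₁` (via `x z₁ z₂ y_i`), the `y_l` with
`l < j` (via an earlier generator `x y_{i'} y_{j'} z₂`), and those `u` for which `u y_i y_j z₂`
splits into two edges of `H` (via `J²`). -/
def colonVars (n : ℕ) (i j : Fin n) : Set (Fin (n + 3)) :=
  {u | u = vz1 n ∨ (∃ l < j, u = vy n l) ∨
    (AntipathAdj u (vy n i) ∧ AntipathAdj (vy n j) (vz2 n)) ∨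
    (AntipathAdj u (vy n j) ∧ AntipathAdj (vy n i) (vz2 n)) ∨
    (AntipathAdj u (vz2 n) ∧ AntipathAdj (vy n i) (vy n j))}

theorem exists_genExps_le_of_mem_colonVars {v : Fin (n + 3)} (hv : v ∈ colonVars n i j) :
    ∃ g ∈ genExps n i j, g ≤ single v 1 + colonExp n i j := by
  have hi := i.isLt
  rcases hv with rfl | ⟨l, hlj, rfl⟩ | ⟨hvi, hjz⟩ | ⟨hvj, hiz⟩ | ⟨hvz, hij⟩
  · exact ⟨_, Or.inl (Or.inr ⟨i, rfl⟩),
      le_iff_exists_add.mpr ⟨single (vy n j) 1, by simp only [colonExp]; abel⟩⟩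
  · have hlj' : (l : ℕ) < j := hlj
    rcases lt_or_ge l i with hli | hil
    · exact ⟨_, Or.inr ⟨l, i, hli.le, by omega, Or.inl hli, rfl⟩,
        le_iff_exists_add.mpr ⟨single (vy n j) 1, by simp only [colonExp]; abel⟩⟩
    · exact ⟨_, Or.inr ⟨i, l, hil, by omega, Or.inr ⟨rfl, hlj⟩, rfl⟩,
        le_iff_exists_add.mpr ⟨single (vy n j) 1, by simp only [colonExp]; abel⟩⟩
  · exact ⟨_, Or.inl (Or.inl (Set.add_mem_add (single_add_single_mem_edgeExps hvi)
        (single_add_single_mem_edgeExps hjz))),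
      le_iff_exists_add.mpr ⟨single (vx n) 1, by simp only [colonExp]; abel⟩⟩
  · exact ⟨_, Or.inl (Or.inl (Set.add_mem_add (single_add_single_mem_edgeExps hvj)
        (single_add_single_mem_edgeExps hiz))),
      le_iff_exists_add.mpr ⟨single (vx n) 1, by simp only [colonExp]; abel⟩⟩
  · exact ⟨_, Or.inl (Or.inl (Set.add_mem_add (single_add_single_mem_edgeExps hvz)
        (single_add_single_mem_edgeExps hij))),
      le_iff_exists_add.mpr ⟨single (vx n) 1, by simp only [colonExp]; abel⟩⟩

theorem colonExp_apply_pos {p : Fin (n + 3)} (h : 0 < colonExp n i j p) :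
    (p : ℕ) = 0 ∨ (p : ℕ) = i + 2 ∨ (p : ℕ) = j + 2 ∨ (p : ℕ) = n + 2 := by
  simp only [colonExp, Finsupp.add_apply, Finsupp.single_apply, Fin.ext_iff, vx_val, vy_val,
    vz2_val] at h
  split_ifs at h <;> omega

theorem colonExp_apply_two_le {p : Fin (n + 3)} (h : 2 ≤ colonExp n i j p) :
    (p : ℕ) = i + 2 ∧ (p : ℕ) = j + 2 := by
  have := j.isLt
  simp only [colonExp, Finsupp.add_apply, Finsupp.single_apply, Fin.ext_iff, vx_val, vy_val,
    vz2_val] at h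
  split_ifs at h <;> omega

/-- Outside `x`, the vertices missing from `colonVars n i j` lie among the consecutive pair
`t, t + 1` of indices; in the paper's indexing these are `y_n, z₂` if `j = n`, `y_i, y_{i+1}` if
`j ≤ i + 1 < n`, and none (`t = n + 3`) if `i + 2 ≤ j < n`. -/
def colonGap (n : ℕ) (i j : Fin n) : ℕ :=
  if (j : ℕ) + 1 = n then n + 1 else if (i : ℕ) + 2 ≤ j then n + 3 else i + 2

theorem mem_colonVars_of_ne_colonGap (hij : i ≤ j) {u : Fin (n + 3)} (hu : 1 ≤ (u : ℕ))
    (h₁ : (u : ℕ) ≠ colonGap n i j) (h₂ : (u : ℕ) ≠ colonGap n i j + 1) :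
    u ∈ colonVars n i j := by
  have := u.isLt
  have := j.isLt
  have hij' : (i : ℕ) ≤ j := hij
  by_cases hlt : (u : ℕ) < j + 2
  · by_cases hu1 : (u : ℕ) = 1
    · exact Or.inl (Fin.ext hu1)
    · exact Or.inr (Or.inl ⟨⟨u - 2, by omega⟩, Fin.lt_def.mpr (by simp only; omega),
        Fin.ext (by simp only [vy_val]; omega)⟩)
  · right; right
    simp only [colonGap, AntipathAdj, IsAntipathEdge, vy_val, vz2_val] at h₁ h₂ ⊢
    split_ifs at h₁ h₂ <;> omega

theorem exists_mem_colonVars_lt_of_isAntipathEdge (hij : i ≤ j) {a b c d : Fin (n + 3)}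
    (hab : IsAntipathEdge a b) (hcd : IsAntipathEdge c d) :
    ∃ v ∈ colonVars n i j,
      colonExp n i j v <
        (single a 1 + single b 1 + (single c 1 + single d 1) : Fin (n + 3) →₀ ℕ) v := by
  set g : Fin (n + 3) →₀ ℕ := single a 1 + single b 1 + (single c 1 + single d 1)
  by_contra! hle
  have once : ∀ p : Fin (n + 3), 1 ≤ (p : ℕ) → 1 ≤ g p → (p : ℕ) ≠ colonGap n i j →
      (p : ℕ) ≠ colonGap n i j + 1 → (p : ℕ) = i + 2 ∨ (p : ℕ) = j + 2 ∨ (p : ℕ) = n + 2 := by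
    intro p hp hgp h₁ h₂
    have := colonExp_apply_pos (hgp.trans (hle p (mem_colonVars_of_ne_colonGap hij hp h₁ h₂)))
    omega
  have twice : ∀ p : Fin (n + 3), 1 ≤ (p : ℕ) → 2 ≤ g p → (p : ℕ) ≠ colonGap n i j →
      (p : ℕ) ≠ colonGap n i j + 1 → (p : ℕ) = i + 2 ∧ (p : ℕ) = j + 2 :=
    fun p hp hgp h₁ h₂ =>
      colonExp_apply_two_le (hgp.trans (hle p (mem_colonVars_of_ne_colonGap hij hp h₁ h₂)))
  obtain ⟨ha, hab⟩ := hab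
  obtain ⟨hc, hcd⟩ := hcd
  have one_le : ∀ p, p = a ∨ p = b ∨ p = c ∨ p = d → 1 ≤ g p := by
    rintro p (rfl | rfl | rfl | rfl) <;>
      simp only [g, Finsupp.add_apply, Finsupp.single_eq_same] <;> omega
  have two_le : ∀ p, p = a ∨ p = b → p = c ∨ p = d → 2 ≤ g p := by
    rintro p (rfl | rfl) (h | h) <;> subst h <;>
      simp only [g, Finsupp.add_apply, Finsupp.single_eq_same] <;> omega
  have := b.isLt
  have := d.isLt
  have := j.isLt
  have hij' : (i : ℕ) ≤ j := hij
  unfold colonGap at once twice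
  split_ifs at once twice with hjn hij₂
  · -- `j = n`: both edges start at `y_i`, which is then doubled although `i < j`
    have := once a ha (one_le a (by simp)) (by omega) (by omega)
    have := once c hc (one_le c (by simp)) (by omega) (by omega)
    have hac : a = c := Fin.ext (by omega)
    have := twice a ha (two_le a (.inl rfl) (.inl hac)) (by omega) (by omega)
    omega
  · -- `i + 2 ≤ j < n`: the four endpoints lie in `{y_i, y_j, z₂}`, so the edges share one
    have := once a ha (one_le a (by simp)) (by omega) (by omega)
    have := once b (by omega) (one_le b (by simp)) (by omega) (by omega)
    have := once c hc (one_le c (by simp)) (by omega) (by omega)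
    have := once d (by omega) (one_le d (by simp)) (by omega) (by omega)
    obtain ⟨p, hp₁, hp₂⟩ : ∃ p, (p = a ∨ p = b) ∧ (p = c ∨ p = d) := by
      rcases (by omega : (a : ℕ) = c ∨ (a : ℕ) = d ∨ (b : ℕ) = c ∨ (b : ℕ) = d)
        with h | h | h | h
      exacts [⟨a, .inl rfl, .inl (Fin.ext h)⟩, ⟨a, .inl rfl, .inr (Fin.ext h)⟩,
        ⟨b, .inr rfl, .inl (Fin.ext h)⟩, ⟨b, .inr rfl, .inr (Fin.ext h)⟩]
    have := twice p (by rcases hp₁ with rfl | rfl <;> omega) (two_le p hp₁ hp₂)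
    omega
  · -- `j ≤ i + 1 < n`: both edges end at `z₂`, which is then doubled
    have hb : (b : ℕ) = n + 2 := by
      have := once a ha (one_le a (by simp))
      have := once b (by omega) (one_le b (by simp))
      omega
    have hd : (d : ℕ) = n + 2 := by
      have := once c hc (one_le c (by simp))
      have := once d (by omega) (one_le d (by simp))
      omega
    have hbd : b = d := Fin.ext (by omega)
    have := twice b (by omega) (two_le b (.inr rfl) (.inr hbd))
    omega

theorem exists_mem_colonVars_lt_of_mem_genExps (hij : i ≤ j) {g : Fin (n + 3) →₀ ℕ}
    (hg : g ∈ genExps n i j) : ∃ v ∈ colonVars n i j, colonExp n i j v < g v := by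
  have hij' : (i : ℕ) ≤ j := hij
  rcases hg with (⟨_, ⟨a, b, hab, rfl⟩, _, ⟨c, d, hcd, rfl⟩, rfl⟩ | ⟨l, rfl⟩) |
    ⟨i', j', -, -, hlt | ⟨rfl, hlt⟩, rfl⟩
  · exact exists_mem_colonVars_lt_of_isAntipathEdge hij hab hcd
  · refine ⟨vz1 n, Or.inl rfl, ?_⟩
    simp only [colonExp, Finsupp.add_apply, Finsupp.single_apply, Fin.ext_iff, vx_val, vz1_val,
      vy_val, vz2_val]
    split_ifs <;> omega
  · have hlt' : (i' : ℕ) < i := hlt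
    refine ⟨vy n i', Or.inr (Or.inl ⟨i', hlt.trans_le hij, rfl⟩), ?_⟩
    simp only [colonExp, Finsupp.add_apply, Finsupp.single_apply, Fin.ext_iff, vx_val, vy_val,
      vz2_val]
    split_ifs <;> omega
  · have hlt' : (j' : ℕ) < j := hlt
    refine ⟨vy n j', Or.inr (Or.inl ⟨j', hlt, rfl⟩), ?_⟩
    simp only [colonExp, Finsupp.add_apply, Finsupp.single_apply, Fin.ext_iff, vx_val, vy_val,
      vz2_val]
    split_ifs <;> omega

end Anticycle

theorem stage2b_colon_general (K : Type*) [Field K] (n : ℕ) (i j : Fin n)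
    (hij : i ≤ j) :
    ∃ S : Set (Fin (n + 3)),
      ((Jideal K n ^ 2 +
          Ideal.span { m | ∃ l : Fin n,
            m = X (vx n) * X (vz1 n) * X (vz2 n) * X (vy n l) } +
          Ideal.span { m | ∃ i' j' : Fin n, i' ≤ j' ∧
            ¬((i' : ℕ) = n - 1 ∧ (j' : ℕ) = n - 1) ∧
            (i' < i ∨ (i' = i ∧ j' < j)) ∧
            m = X (vx n) * X (vy n i') * X (vy n j') * X (vz2 n) }).colon
        ((Ideal.span {X (vx n) * X (vy n i) * X (vy n j) * X (vz2 n)} : Ideal (MvPolynomial (Fin (n + 3)) K)) : Set (MvPolynomial (Fin (n + 3)) K))) =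
      Ideal.span (MvPolynomial.X '' S) := by
  refine ⟨colonVars n i j, ?_⟩
  rw [span_genExps, X_mul_X_mul_X_mul_X_eq_monomial]
  exact colon_span_monomial_eq_span_X (fun _ hv => exists_genExps_le_of_mem_colonVars hv)
    (fun _ hg => exists_mem_colonVars_lt_of_mem_genExps hij hg)

/-- Fix `1 ≤ i ≤ j ≤ n` with `(i,j) ≠ (n,n)`.  With
`I' = J² + (x z₁ z₂ y_l : 1 ≤ l ≤ n) + (x y_{i'} y_{j'} z₂ : i' ≤ j', (i',j') ≠ (n,n),
(i',j')` dictionary-smaller than `(i,j))`, the colon ideal `I' : (x y_i y_j z₂)` is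
generated by a subset of the variables.  (Indices `i j : Fin n` are 0-indexed, so the
excluded pair `(n,n)` is `(n-1,n-1)`.) -/
theorem stage2b_colon (K : Type*) [Field K] (n : ℕ) (hn : 2 ≤ n) (i j : Fin n)
    (hij : i ≤ j) (hnn : ¬((i : ℕ) = n - 1 ∧ (j : ℕ) = n - 1)) :
    ∃ S : Set (Fin (n + 3)),
      ((Jideal K n ^ 2 +
          Ideal.span { m | ∃ l : Fin n,
            m = X (vx n) * X (vz1 n) * X (vz2 n) * X (vy n l) } +
          Ideal.span { m | ∃ i' j' : Fin n, i' ≤ j' ∧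
            ¬((i' : ℕ) = n - 1 ∧ (j' : ℕ) = n - 1) ∧
            (i' < i ∨ (i' = i ∧ j' < j)) ∧
            m = X (vx n) * X (vy n i') * X (vy n j') * X (vz2 n) }).colon
        ((Ideal.span {X (vx n) * X (vy n i) * X (vy n j) * X (vz2 n)} : Ideal (MvPolynomial (Fin (n + 3)) K)) : Set (MvPolynomial (Fin (n + 3)) K))) =
      Ideal.span (MvPolynomial.X '' S) :=
  stage2b_colon_general K n i j hij
end

section
/- Let n ≥ 2 and let G be the anticycle on the n+3 vertices x, z_1, z_2, y_1,…,y_n, with J = I(H) the edge ideal of the induced antipath H = G \ {x}. Fix 1 ≤ i ≤ j ≤ k ≤ n with i + 2 ≤ k, and let I' = J^2 + (x z_1 z_2 y_l : 1 ≤ l ≤ n) + ( x y_{k'} y_{l'} z_2 : 1 ≤ k' ≤ l' ≤ n, (k',l') ≠ (n,n) ) + ( x y_{k'} y_{l'} z_1 : 1 ≤ k' ≤ l' ≤ n, (k',l') ≠ (1,1) ) + ( x y_{i'} y_{j'} y_{k'} : 1 ≤ i' ≤ j' ≤ k' ≤ n, i' + 2 ≤ k', (i',j',k') strictly dictionary-smaller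 than (i,j,k) ). Then the colon ideal I' : (x y_i y_j y_k) is generated by a subset of the variables of R. -/
open MvPolynomial

/-!
`I'` is a monomial ideal, so its colon by `m = x y_i y_j y_k` is spanned by the quotients
`t / gcd(t, m)` of its generators `t`. Hence the colon is spanned by the variables `v` with
`v m ∈ I'` as soon as every generator `t` has such a variable `v` with `deg_v m < deg_v t`.
For generators involving `z₁` or `z₂` take `v = z₁` or `v = z₂`. For the others take `v = y_l`
with `l` a witness index: then `y_l m` is a multiple of a lexicographically smaller
generator `x y_{i'} y_{j'} y_{k'}` or of `y_i y_k · y_j y_l ∈ J²`. A count of indices shows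
that every generator `x y_a y_b y_c` smaller than `x y_i y_j y_k`, and every product of two
edges `y_a y_b · y_c y_d` of the antipath, exceeds `m` in the degree of some `y_l` with `l` a
witness index.
-/

open Pointwise

theorem colon_span_singleton_monomial_eq_span_X {σ R : Type*} [CommSemiring R]
    {G : Set (MvPolynomial σ R)} {m : σ →₀ ℕ}
    (hG : ∀ g ∈ G, ∃ t, g = monomial t 1 ∧
      ∃ v, m v < t v ∧ X v * monomial m 1 ∈ Ideal.span G) :
    (Ideal.span G).colon
        ((Ideal.span {monomial m 1} : Ideal (MvPolynomial σ R)) : Set (MvPolynomial σ R)) =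
      Ideal.span (X '' {v | X v * monomial m 1 ∈ Ideal.span G}) := by
  set T := {t | monomial t (1 : R) ∈ G ∧
    ∃ v, m v < t v ∧ X v * monomial m 1 ∈ Ideal.span G}
  have hGT : G = (fun t => monomial t (1 : R)) '' T := by
    ext g
    constructor
    · intro hg
      obtain ⟨t, rfl, hv⟩ := hG g hg
      exact ⟨t, ⟨hg, hv⟩, rfl⟩
    · rintro ⟨t, ⟨ht, -⟩, rfl⟩
      exact ht
  apply le_antisymm
  · intro f hf
    rw [Ideal.mem_colon_span_singleton, hGT, mem_ideal_span_monomial_image] at hf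
    rw [mem_ideal_span_X_image]
    intro d hd
    have hdm : d + m ∈ (f * monomial m 1).support := by
      rwa [mem_support_iff, coeff_mul_monomial, mul_one, ← mem_support_iff]
    obtain ⟨t, ⟨-, v, hv, hvm⟩, htle⟩ := hf _ hdm
    refine ⟨v, hvm, ?_⟩
    have hle := htle v
    simp only [Finsupp.add_apply] at hle
    omega
  · rw [Ideal.span_le]
    rintro _ ⟨v, hv, rfl⟩
    exact Ideal.mem_colon_span_singleton.mpr hv

theorem X_mul_X_mul_X_mul_X {σ R : Type*} [CommSemiring R] [DecidableEq σ] (a b c d : σ) :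
    (X a * X b * X c * X d : MvPolynomial σ R) =
      monomial (Multiset.toFinsupp {a, b, c, d}) 1 := by
  simp only [Multiset.insert_eq_cons, ← Multiset.singleton_add, Multiset.toFinsupp_add,
    Multiset.toFinsupp_singleton, X, monomial_mul, one_mul, add_assoc]

theorem Multiset.count_lt_count_of_notMem_of_mem {α : Type*} [DecidableEq α] {s t : Multiset α}
    {a : α} (hs : a ∉ s) (ht : a ∈ t) : s.count a < t.count a := by
  rw [Multiset.count_eq_zero.mpr hs]
  exact Multiset.count_pos.mpr ht

section Vertices

variable {n : ℕ}

theorem vy_injective : Function.Injective (vy n) :=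
  fun a b h => Fin.ext (by simpa [vy] using h)

@[simp] theorem vy_ne_vx (l : Fin n) : vy n l ≠ vx n := Fin.ne_of_val_ne (by simp [vx, vy])

@[simp] theorem vz1_ne_vx : vz1 n ≠ vx n := Fin.ne_of_val_ne (by simp [vx, vz1])

@[simp] theorem vz2_ne_vx : vz2 n ≠ vx n := Fin.ne_of_val_ne (by simp [vx, vz2])

@[simp] theorem vz1_ne_vy (l : Fin n) : vz1 n ≠ vy n l := Fin.ne_of_val_ne (by simp [vz1, vy])

@[simp] theorem vz2_ne_vy (l : Fin n) : vz2 n ≠ vy n l :=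
  Fin.ne_of_val_ne (by simp only [vz2, vy]; omega)

theorem exists_eq_vy {p : Fin (n + 3)} (h1 : 2 ≤ (p : ℕ)) (h2 : (p : ℕ) ≠ n + 2) :
    ∃ l, p = vy n l :=
  ⟨⟨p - 2, by omega⟩, Fin.ext (by simp only [vy]; omega)⟩

theorem count_vy_insert_vx (a b c l : Fin n) :
    Multiset.count (vy n l) {vx n, vy n a, vy n b, vy n c} = Multiset.count l {a, b, c} := by
  simp [Multiset.insert_eq_cons, Multiset.count_cons, Multiset.count_singleton,
    vy_injective.eq_iff]

theorem count_vy_insert_vy (a b c d l : Fin n) :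
    Multiset.count (vy n l) {vy n a, vy n b, vy n c, vy n d} =
      Multiset.count l {a, b, c, d} := by
  simp [Multiset.insert_eq_cons, Multiset.count_cons, Multiset.count_singleton,
    vy_injective.eq_iff]

end Vertices

/-- `y_l m` is a multiple of `x y_l y_j y_k` (`l < i`), `x y_i y_l y_k` (`i ≤ l < j`),
`x y_i y_j y_l` (`i + 2 ≤ l`, `j ≤ l < k`) or `y_i y_k · y_j y_l` (`j + 2 ≤ l`). -/
def IsWitness {n : ℕ} (i j k l : Fin n) : Prop :=
  l < j ∨ ((i : ℕ) + 2 ≤ l ∧ j ≤ l ∧ l < k) ∨ (j : ℕ) + 2 ≤ l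

section Combinatorics

variable {n : ℕ} {i j k : Fin n}
open Multiset

theorem exists_isWitness_of_lex_lt {a b c : Fin n} (hij : i ≤ j) (hjk : j ≤ k)
    (hbc : b ≤ c) (hac : (a : ℕ) + 2 ≤ c)
    (hlex : a < i ∨ (a = i ∧ (b < j ∨ (b = j ∧ c < k)))) :
    ∃ l, IsWitness i j k l ∧ count l {i, j, k} < count l {a, b, c} := by
  rcases hlex with hai | ⟨rfl, hbj | ⟨rfl, hck⟩⟩
  · refine ⟨a, Or.inl (by omega), ?_⟩
    simp only [insert_eq_cons, count_cons, count_singleton]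
    split_ifs <;> omega
  · refine ⟨b, Or.inl hbj, ?_⟩
    simp only [insert_eq_cons, count_cons, count_singleton]
    split_ifs <;> omega
  · refine ⟨c, Or.inr (Or.inl ⟨hac, hbc, hck⟩), ?_⟩
    simp only [insert_eq_cons, count_cons, count_singleton]
    split_ifs <;> omega

theorem exists_isWitness_of_sq {a b c d : Fin n} (hij : i ≤ j) (hjk : j ≤ k)
    (hik : (i : ℕ) + 2 ≤ k) (hab : (a : ℕ) + 2 ≤ b) (hcd : (c : ℕ) + 2 ≤ d) :
    ∃ l, IsWitness i j k l ∧ count l {i, j, k} < count l {a, b, c, d} := by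
  by_contra! H
  have once : ∀ p ∈ ({a, b, c, d} : Multiset (Fin n)), IsWitness i j k p →
      p = i ∨ p = j ∨ p = k := fun p hp hw => by
    simpa using count_pos.mp ((count_pos.mpr hp).trans_le (H p hw))
  have twice : ∀ p, (p = a ∨ p = b) → (p = c ∨ p = d) → IsWitness i j k p →
      (p = i ∧ p = j) ∨ (p = j ∧ p = k) := fun p hpab hpcd hw => by
    have hcount := H p hw
    simp only [insert_eq_cons, count_cons, count_singleton] at hcount
    split_ifs at hcount <;> omega
  have ha := once a (by simp)
  have hb := once b (by simp)
  have hc := once c (by simp)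
  have hd := once d (by simp)
  have ha₂ := twice a (by simp)
  have hb₂ := twice b (by simp)
  unfold IsWitness at *
  -- no placement of the two edges relative to `i ≤ j ≤ k` meets all these constraints
  omega

end Combinatorics

def antipathEdges (K : Type*) [CommSemiring K] (n : ℕ) : Set (MvPolynomial (Fin (n + 3)) K) :=
  { m | ∃ a b : Fin (n + 3), 1 ≤ (a : ℕ) ∧ (a : ℕ) + 2 ≤ (b : ℕ) ∧ m = X a * X b }

def generatorsI' (K : Type*) [CommSemiring K] (n : ℕ) (i j k : Fin n) :
    Set (MvPolynomial (Fin (n + 3)) K) :=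
  antipathEdges K n * antipathEdges K n ∪
    { m | ∃ l : Fin n, m = X (vx n) * X (vz1 n) * X (vz2 n) * X (vy n l) } ∪
    { m | ∃ k' l' : Fin n, k' ≤ l' ∧ ¬((k' : ℕ) = n - 1 ∧ (l' : ℕ) = n - 1) ∧
      m = X (vx n) * X (vy n k') * X (vy n l') * X (vz2 n) } ∪
    { m | ∃ k' l' : Fin n, k' ≤ l' ∧ ¬((k' : ℕ) = 0 ∧ (l' : ℕ) = 0) ∧
      m = X (vx n) * X (vy n k') * X (vy n l') * X (vz1 n) } ∪
    { m | ∃ i' j' k' : Fin n, i' ≤ j' ∧ j' ≤ k' ∧ (i' : ℕ) + 2 ≤ (k' : ℕ) ∧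
      (i' < i ∨ (i' = i ∧ (j' < j ∨ (j' = j ∧ k' < k)))) ∧
      m = X (vx n) * X (vy n i') * X (vy n j') * X (vy n k') }

theorem span_generatorsI' (K : Type*) [Field K] (n : ℕ) (i j k : Fin n) :
    Ideal.span (generatorsI' K n i j k) =
      Jideal K n ^ 2 +
        Ideal.span { m | ∃ l : Fin n,
          m = X (vx n) * X (vz1 n) * X (vz2 n) * X (vy n l) } +
        Ideal.span { m | ∃ k' l' : Fin n, k' ≤ l' ∧
          ¬((k' : ℕ) = n - 1 ∧ (l' : ℕ) = n - 1) ∧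
          m = X (vx n) * X (vy n k') * X (vy n l') * X (vz2 n) } +
        Ideal.span { m | ∃ k' l' : Fin n, k' ≤ l' ∧
          ¬((k' : ℕ) = 0 ∧ (l' : ℕ) = 0) ∧
          m = X (vx n) * X (vy n k') * X (vy n l') * X (vz1 n) } +
        Ideal.span { m | ∃ i' j' k' : Fin n, i' ≤ j' ∧ j' ≤ k' ∧
          (i' : ℕ) + 2 ≤ (k' : ℕ) ∧
          (i' < i ∨ (i' = i ∧ (j' < j ∨ (j' = j ∧ k' < k)))) ∧
          m = X (vx n) * X (vy n i') * X (vy n j') * X (vy n k') } := by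
  simp only [generatorsI', antipathEdges, Ideal.span_union, Jideal, sq, Ideal.span_mul_span',
    Ideal.add_eq_sup]

section Witnesses

variable {K : Type*} [CommSemiring K] {n : ℕ} {i j k : Fin n}

theorem X_vz1_mul_mem (hjk : j ≤ k) (hik : (i : ℕ) + 2 ≤ k) :
    X (vz1 n) * (X (vx n) * X (vy n i) * X (vy n j) * X (vy n k)) ∈
      Ideal.span (generatorsI' K n i j k) :=
  Ideal.mem_of_dvd _ ⟨X (vy n i), by ring⟩
    (Ideal.subset_span (Or.inl (Or.inr ⟨j, k, hjk, by omega, rfl⟩)))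

theorem X_vz2_mul_mem (hij : i ≤ j) (hik : (i : ℕ) + 2 ≤ k) :
    X (vz2 n) * (X (vx n) * X (vy n i) * X (vy n j) * X (vy n k)) ∈
      Ideal.span (generatorsI' K n i j k) :=
  Ideal.mem_of_dvd _ ⟨X (vy n k), by ring⟩
    (Ideal.subset_span (Or.inl (Or.inl (Or.inr ⟨i, j, hij, by omega, rfl⟩))))

theorem X_vy_mul_mem_of_isWitness (hij : i ≤ j) (hjk : j ≤ k) (hik : (i : ℕ) + 2 ≤ k)
    {l : Fin n} (hl : IsWitness i j k l) :
    X (vy n l) * (X (vx n) * X (vy n i) * X (vy n j) * X (vy n k)) ∈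
      Ideal.span (generatorsI' K n i j k) := by
  rcases hl with hlj | ⟨hil, hjl, hlk⟩ | hjl
  · by_cases hli : l < i
    · exact Ideal.mem_of_dvd _ ⟨X (vy n i), by ring⟩ (Ideal.subset_span
        (Or.inr ⟨l, j, k, by omega, hjk, by omega, Or.inl hli, rfl⟩))
    · exact Ideal.mem_of_dvd _ ⟨X (vy n j), by ring⟩ (Ideal.subset_span
        (Or.inr ⟨i, l, k, by omega, by omega, hik, Or.inr ⟨rfl, Or.inl hlj⟩, rfl⟩))
  · exact Ideal.mem_of_dvd _ ⟨X (vy n k), by ring⟩ (Ideal.subset_span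
      (Or.inr ⟨i, j, l, hij, hjl, hil, Or.inr ⟨rfl, Or.inr ⟨rfl, hlk⟩⟩, rfl⟩))
  · refine Ideal.mem_of_dvd _ ⟨X (vx n), by ring⟩ (Ideal.subset_span (Or.inl (Or.inl
      (Or.inl (Or.inl (Set.mul_mem_mul (a := X (vy n i) * X (vy n k))
        (b := X (vy n j) * X (vy n l)) ?_ ?_))))))
    · exact ⟨vy n i, vy n k, by simp [vy], by simp only [vy]; omega, rfl⟩
    · exact ⟨vy n j, vy n l, by simp [vy], by simp only [vy]; omega, rfl⟩

theorem exists_witness_of_edges (hij : i ≤ j) (hjk : j ≤ k) (hik : (i : ℕ) + 2 ≤ k)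
    {a b c d : Fin (n + 3)} (ha : 1 ≤ (a : ℕ)) (hab : (a : ℕ) + 2 ≤ b)
    (hc : 1 ≤ (c : ℕ)) (hcd : (c : ℕ) + 2 ≤ d) :
    ∃ v, Multiset.count v {vx n, vy n i, vy n j, vy n k} < Multiset.count v {a, b, c, d} ∧
      X v * (X (vx n) * X (vy n i) * X (vy n j) * X (vy n k)) ∈
        Ideal.span (generatorsI' K n i j k) := by
  by_cases hz1 : vz1 n ∈ ({a, b, c, d} : Multiset _)
  · exact ⟨vz1 n, Multiset.count_lt_count_of_notMem_of_mem (by simp) hz1, X_vz1_mul_mem hjk hik⟩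
  by_cases hz2 : vz2 n ∈ ({a, b, c, d} : Multiset _)
  · exact ⟨vz2 n, Multiset.count_lt_count_of_notMem_of_mem (by simp) hz2, X_vz2_mul_mem hij hik⟩
  simp only [Multiset.insert_eq_cons, Multiset.mem_cons, Multiset.mem_singleton, not_or,
    Fin.ext_iff, vz1, vz2] at hz1 hz2
  obtain ⟨α, rfl⟩ := exists_eq_vy (p := a) (by omega) (by omega)
  obtain ⟨β, rfl⟩ := exists_eq_vy (p := b) (by omega) (by omega)
  obtain ⟨γ, rfl⟩ := exists_eq_vy (p := c) (by omega) (by omega)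
  obtain ⟨δ, rfl⟩ := exists_eq_vy (p := d) (by omega) (by omega)
  simp only [vy] at hab hcd
  obtain ⟨l, hw, hl⟩ := exists_isWitness_of_sq hij hjk hik (by omega : (α : ℕ) + 2 ≤ β)
    (by omega : (γ : ℕ) + 2 ≤ δ)
  exact ⟨vy n l, by rwa [count_vy_insert_vx, count_vy_insert_vy],
    X_vy_mul_mem_of_isWitness hij hjk hik hw⟩

theorem exists_witness_of_mem_generatorsI' (hij : i ≤ j) (hjk : j ≤ k)
    (hik : (i : ℕ) + 2 ≤ k) {g : MvPolynomial (Fin (n + 3)) K} (hg : g ∈ generatorsI' K n i j k) :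
    ∃ a b c d, g = X a * X b * X c * X d ∧ ∃ v,
      Multiset.count v {vx n, vy n i, vy n j, vy n k} < Multiset.count v {a, b, c, d} ∧
      X v * (X (vx n) * X (vy n i) * X (vy n j) * X (vy n k)) ∈
        Ideal.span (generatorsI' K n i j k) := by
  rcases hg with (((⟨_, ⟨a, b, ha, hab, rfl⟩, _, ⟨c, d, hc, hcd, rfl⟩, rfl⟩ | ⟨l, rfl⟩) |
    ⟨k', l', -, -, rfl⟩) | ⟨k', l', -, -, rfl⟩) | ⟨a, b, c, -, hbc, hac, hlex, rfl⟩
  · exact ⟨a, b, c, d, (mul_assoc _ _ _).symm,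
      exists_witness_of_edges hij hjk hik ha hab hc hcd⟩
  · exact ⟨_, _, _, _, rfl, vz1 n,
      Multiset.count_lt_count_of_notMem_of_mem (by simp) (by simp), X_vz1_mul_mem hjk hik⟩
  · exact ⟨_, _, _, _, rfl, vz2 n,
      Multiset.count_lt_count_of_notMem_of_mem (by simp) (by simp), X_vz2_mul_mem hij hik⟩
  · exact ⟨_, _, _, _, rfl, vz1 n,
      Multiset.count_lt_count_of_notMem_of_mem (by simp) (by simp), X_vz1_mul_mem hjk hik⟩
  · obtain ⟨l, hw, hl⟩ := exists_isWitness_of_lex_lt hij hjk hbc hac hlex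
    exact ⟨_, _, _, _, rfl, vy n l, by rwa [count_vy_insert_vx, count_vy_insert_vx],
      X_vy_mul_mem_of_isWitness hij hjk hik hw⟩

end Witnesses

theorem stage2d_colon_general (K : Type*) [Field K] (n : ℕ) (i j k : Fin n)
    (hij : i ≤ j) (hjk : j ≤ k) (hik : (i : ℕ) + 2 ≤ (k : ℕ)) :
    ∃ S : Set (Fin (n + 3)),
      ((Jideal K n ^ 2 +
          Ideal.span { m | ∃ l : Fin n,
            m = X (vx n) * X (vz1 n) * X (vz2 n) * X (vy n l) } +
          Ideal.span { m | ∃ k' l' : Fin n, k' ≤ l' ∧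
            ¬((k' : ℕ) = n - 1 ∧ (l' : ℕ) = n - 1) ∧
            m = X (vx n) * X (vy n k') * X (vy n l') * X (vz2 n) } +
          Ideal.span { m | ∃ k' l' : Fin n, k' ≤ l' ∧
            ¬((k' : ℕ) = 0 ∧ (l' : ℕ) = 0) ∧
            m = X (vx n) * X (vy n k') * X (vy n l') * X (vz1 n) } +
          Ideal.span { m | ∃ i' j' k' : Fin n, i' ≤ j' ∧ j' ≤ k' ∧
            (i' : ℕ) + 2 ≤ (k' : ℕ) ∧
            (i' < i ∨ (i' = i ∧ (j' < j ∨ (j' = j ∧ k' < k)))) ∧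
            m = X (vx n) * X (vy n i') * X (vy n j') * X (vy n k') }).colon
        ((Ideal.span {X (vx n) * X (vy n i) * X (vy n j) * X (vy n k)} :
          Ideal (MvPolynomial (Fin (n + 3)) K)) : Set (MvPolynomial (Fin (n + 3)) K))) =
      Ideal.span (MvPolynomial.X '' S) := by
  rw [← span_generatorsI', X_mul_X_mul_X_mul_X]
  refine ⟨_, colon_span_singleton_monomial_eq_span_X fun g hg => ?_⟩
  obtain ⟨a, b, c, d, rfl, v, hv, hmem⟩ := exists_witness_of_mem_generatorsI' hij hjk hik hg
  exact ⟨_, X_mul_X_mul_X_mul_X a b c d, v, hv, by rwa [← X_mul_X_mul_X_mul_X]⟩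

/-- Fix `1 ≤ i ≤ j ≤ k ≤ n` with `i + 2 ≤ k`.  With
`I' = J² + (x z₁ z₂ y_l : 1 ≤ l ≤ n) + (x y_{k'} y_{l'} z₂ : k' ≤ l', (k',l') ≠ (n,n)) +
(x y_{k'} y_{l'} z₁ : k' ≤ l', (k',l') ≠ (1,1)) + (x y_{i'} y_{j'} y_{k'} :
i' ≤ j' ≤ k', i' + 2 ≤ k', (i',j',k')` dictionary-smaller than `(i,j,k))`, the colon ideal
`I' : (x y_i y_j y_k)` is generated by a subset of the variables.
(Indices are 0-indexed.) -/
theorem stage2d_colon (K : Type*) [Field K] (n : ℕ) (hn : 2 ≤ n) (i j k : Fin n)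
    (hij : i ≤ j) (hjk : j ≤ k) (hik : (i : ℕ) + 2 ≤ (k : ℕ)) :
    ∃ S : Set (Fin (n + 3)),
      ((Jideal K n ^ 2 +
          Ideal.span { m | ∃ l : Fin n,
            m = X (vx n) * X (vz1 n) * X (vz2 n) * X (vy n l) } +
          Ideal.span { m | ∃ k' l' : Fin n, k' ≤ l' ∧
            ¬((k' : ℕ) = n - 1 ∧ (l' : ℕ) = n - 1) ∧
            m = X (vx n) * X (vy n k') * X (vy n l') * X (vz2 n) } +
          Ideal.span { m | ∃ k' l' : Fin n, k' ≤ l' ∧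
            ¬((k' : ℕ) = 0 ∧ (l' : ℕ) = 0) ∧
            m = X (vx n) * X (vy n k') * X (vy n l') * X (vz1 n) } +
          Ideal.span { m | ∃ i' j' k' : Fin n, i' ≤ j' ∧ j' ≤ k' ∧
            (i' : ℕ) + 2 ≤ (k' : ℕ) ∧
            (i' < i ∨ (i' = i ∧ (j' < j ∨ (j' = j ∧ k' < k)))) ∧
            m = X (vx n) * X (vy n i') * X (vy n j') * X (vy n k') }).colon
        ((Ideal.span {X (vx n) * X (vy n i) * X (vy n j) * X (vy n k)} :
          Ideal (MvPolynomial (Fin (n + 3)) K)) : Set (MvPolynomial (Fin (n + 3)) K))) =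
      Ideal.span (MvPolynomial.X '' S) :=
  stage2d_colon_general K n i j k hij hjk hik
end
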